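/- arXiv:2208.06689 — 2 statements merged into one kernel-verified Lean document; each statement's English description precedes it below -/
import Mathlib

section
/- Let G be a graph and let 𝒞 be a collection of finite connected vertex sets satisfying: (a) for distinct C, D ∈ 𝒞, either the closed l-neighborhood of C is contained in D, or the closed l-neighborhood of D is contained in C, or the distance between C and D exceeds l (with l ≥ 1); and (b) for every vertex y, some member of 𝒞 contains the closed 1-neighborhood B(y,1). Then for any two vertices x, y in the same connected component of G, some member of 𝒞 contains both x and y. -/
/-- The closed `r`-neighborhood of a set of vertices `S` in a graph `G`. -/
def graphBall {V : Type*} (G : SimpleGraph V) (S : Set V) (r : ℕ) : Set V :=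
  {v | ∃ s ∈ S, G.Reachable s v ∧ G.dist s v ≤ r}

/-- Two vertex sets are at distance greater than `l`. -/
def farApart {V : Type*} (G : SimpleGraph V) (C D : Set V) (l : ℕ) : Prop :=
  ∀ c ∈ C, ∀ d ∈ D, ¬(G.Reachable c d ∧ G.dist c d ≤ l)

/-- Toast connectivity: if a collection `𝒞` of nonempty finite connected vertex sets
satisfies the `l`-toast separation condition (a) and every closed 1-neighborhood `B(y,1)`
is contained in some piece (b), then any two vertices in the same connected component lie
together in some piece. -/
theorem toast_pieces_connect {V : Type*} (G : SimpleGraph V) (l : ℕ) (hl : 1 ≤ l)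
    (𝒞 : Set (Set V))
    (hpieces : ∀ C ∈ 𝒞, C.Nonempty ∧ C.Finite ∧ (G.induce C).Connected)
    (hsep : ∀ C ∈ 𝒞, ∀ D ∈ 𝒞, C ≠ D →
      graphBall G C l ⊆ D ∨ graphBall G D l ⊆ C ∨ farApart G C D l)
    (hcover : ∀ y : V, ∃ C ∈ 𝒞, graphBall G {y} 1 ⊆ C) :
    ∀ x y : V, G.Reachable x y → ∃ C ∈ 𝒞, x ∈ C ∧ y ∈ C := by
  intro x y hr
  obtain ⟨p⟩ := hr
  induction p with
  | nil =>
    rename_i w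
    obtain ⟨C, hC, hsub⟩ := hcover w
    have hw : w ∈ C := hsub ⟨w, rfl, SimpleGraph.Reachable.refl w, by simp [SimpleGraph.dist_self]⟩
    exact ⟨C, hC, hw, hw⟩
  | cons h p ih =>
    rename_i u v w
    obtain ⟨C, hC, hvC, hwC⟩ := ih
    obtain ⟨D, hD, hsub⟩ := hcover u
    have huD : u ∈ D := hsub ⟨u, rfl, SimpleGraph.Reachable.refl u, by simp [SimpleGraph.dist_self]⟩
    have hdistuv : G.dist u v ≤ 1 := by
      have := SimpleGraph.dist_le h.toWalk
      simpa using this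
    have hvD : v ∈ D := hsub ⟨u, rfl, h.reachable, hdistuv⟩
    by_cases hCD : C = D
    · exact ⟨C, hC, hCD ▸ huD, hwC⟩
    · rcases hsep C hC D hD hCD with hball | hball | hfar
      · refine ⟨D, hD, huD, hball ⟨w, hwC, SimpleGraph.Reachable.refl w, ?_⟩⟩
        simp [SimpleGraph.dist_self]
      · refine ⟨C, hC, hball ⟨u, huD, SimpleGraph.Reachable.refl u, ?_⟩, hwC⟩
        simp [SimpleGraph.dist_self]
      · exact absurd ⟨SimpleGraph.Reachable.refl v, by simp [SimpleGraph.dist_self]⟩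
          (hfar v hvC v hvD)
end

section
/- For the homomorphism LCL Π_H associated to a finite graph H, Π_H is greedy if and only if H contains a clique on Δ+1 vertices. -/
/-- For the homomorphism LCL `Π_H` on `Δ`-regular graphs associated to a finite graph
`H` (all half-edges at a vertex get the same label, labels of adjacent vertices must be
adjacent in `H`), `Π_H` is greedy iff `H` contains a clique on `Δ + 1` vertices. Here
greediness of `Π_H` is spelled out: some nonempty set `S` of vertices of `H` is such that
for every `k ≤ Δ` and labels `u_0, ..., u_{k-1} ∈ S` on the incoming half-edges, there is
a vertex `v` adjacent in `H` to every `u_i`, with `v ∈ S` whenever `k < Δ`. -/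
theorem homomorphism_lcl_greedy_iff_clique {V : Type*} [Fintype V]
    (H : SimpleGraph V) (Δ : ℕ) (hΔ : 2 ≤ Δ) :
    (∃ S : Set V, S.Nonempty ∧
      ∀ k ≤ Δ, ∀ u : Fin k → V, (∀ i, u i ∈ S) →
        ∃ v : V, (∀ i, H.Adj v (u i)) ∧ (k < Δ → v ∈ S)) ↔
    ∃ K : Finset V, H.IsNClique (Δ + 1) K := by
  classical
  constructor
  · rintro ⟨S, hSne, hS⟩
    have key : ∀ j, j ≤ Δ → ∃ f : Fin j → V,
        (∀ i, f i ∈ S) ∧ ∀ i i', i ≠ i' → H.Adj (f i) (f i') := by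
      intro j
      induction j with
      | zero => exact fun _ => ⟨Fin.elim0, fun i => i.elim0, fun i => i.elim0⟩
      | succ j ih =>
        intro hj
        obtain ⟨f, hfS, hfadj⟩ := ih (Nat.le_of_succ_le hj)
        obtain ⟨v, hvadj, hvS⟩ := hS j (Nat.le_of_succ_le hj) f hfS
        refine ⟨Fin.snoc f v, ?_, ?_⟩
        · intro i
          refine Fin.lastCases ?_ ?_ i
          · simpa using hvS (Nat.lt_of_succ_le hj)
          · intro i; simpa using hfS i
        · intro i i' hne
          rcases Fin.eq_castSucc_or_eq_last i with ⟨a, rfl⟩ | rfl <;>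
            rcases Fin.eq_castSucc_or_eq_last i' with ⟨b, rfl⟩ | rfl
          · simp only [Fin.snoc_castSucc]
            exact hfadj a b (fun h => hne (congrArg Fin.castSucc h))
          · simpa using (hvadj a).symm
          · simpa using hvadj b
          · exact absurd rfl hne
    obtain ⟨f, hfS, hfadj⟩ := key Δ le_rfl
    obtain ⟨v, hvadj, -⟩ := hS Δ le_rfl f hfS
    have gadj : ∀ i i' : Fin (Δ + 1), i ≠ i' →
        H.Adj ((Fin.snoc f v : Fin (Δ + 1) → V) i) ((Fin.snoc f v : Fin (Δ + 1) → V) i') := by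
      intro i i' hne
      rcases Fin.eq_castSucc_or_eq_last i with ⟨a, rfl⟩ | rfl <;>
        rcases Fin.eq_castSucc_or_eq_last i' with ⟨b, rfl⟩ | rfl
      · simp only [Fin.snoc_castSucc]
        exact hfadj a b (fun h => hne (congrArg Fin.castSucc h))
      · simpa using (hvadj a).symm
      · simpa using hvadj b
      · exact absurd rfl hne
    have ginj : Function.Injective (Fin.snoc f v : Fin (Δ + 1) → V) := by
      intro i i' h
      by_contra hne
      exact (gadj i i' hne).ne h
    refine ⟨Finset.image (Fin.snoc f v) Finset.univ, ?_, ?_⟩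
    · intro x hx y hy hxy
      simp only [Finset.coe_image, Set.mem_image] at hx hy
      obtain ⟨i, -, rfl⟩ := hx
      obtain ⟨i', -, rfl⟩ := hy
      exact gadj i i' (fun h => hxy (by rw [h]))
    · rw [Finset.card_image_of_injective _ ginj, Finset.card_univ, Fintype.card_fin]
  · rintro ⟨K, hK⟩
    classical
    have hcard : K.card = Δ + 1 := hK.2
    refine ⟨↑K, ?_, ?_⟩
    · obtain ⟨x, hx⟩ := Finset.card_pos.mp (show 0 < K.card by omega)
      exact ⟨x, hx⟩
    · intro k hk u huS
      have himg : (Finset.image u Finset.univ).card ≤ k :=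
        Finset.card_image_le.trans (by simp [Finset.card_univ])
      have : ∃ w ∈ K, w ∉ Finset.image u Finset.univ := by
        by_contra h
        push_neg at h
        have hsub := Finset.card_le_card (fun x hx => h x hx)
        omega
      obtain ⟨w, hwK, hw⟩ := this
      refine ⟨w, fun i => ?_, fun _ => hwK⟩
      refine hK.1 hwK (huS i) (fun h => hw ?_)
      rw [h]
      exact Finset.mem_image_of_mem u (Finset.mem_univ i)
end
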